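/- arXiv:2308.00260 — 8 statements merged into one kernel-verified Lean document; each statement's English description precedes it below -/
import Mathlib

section
/- For the dihedral group D_{2n} of order 2n with n ≥ 4 even, the commuting probability equals (n+6)/(4n). -/
/-!
Sort the pairs of `D_{2n}` by the four constructor combinations. Two rotations always commute,
`r i` and `sr j` commute iff `2i = 0`, and `sr i`, `sr j` commute iff `2(i - j) = 0`; so there are
`n² + 3nT` commuting pairs, where `T` is the number of solutions of `2a = 0` in `ZMod n`.
For even `n = 2m` these solutions are `0` and `m`, so `T = 2` and `cp = (n² + 6n) / (2n)²`.
-/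

open Finset

namespace ZMod

theorem add_self_eq_zero_iff_of_even {m : ℕ} {a : ZMod (m + m)} :
    a + a = 0 ↔ a = 0 ∨ a = m := by
  constructor
  · obtain ⟨k, rfl⟩ := intCast_surjective a
    intro hk
    rw [← Int.cast_add, intCast_zmod_eq_zero_iff_dvd] at hk
    obtain ⟨c, hc⟩ := hk
    obtain ⟨d, rfl | rfl⟩ := Int.even_or_odd' c
    · left
      rw [show k = ((m + m : ℕ) : ℤ) * d by push_cast at hc ⊢; linarith, Int.cast_mul,
        Int.cast_natCast, natCast_self, zero_mul]
    · right
      rw [show k = ((m + m : ℕ) : ℤ) * d + m by push_cast at hc ⊢; linarith, Int.cast_add,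
        Int.cast_mul, Int.cast_natCast, natCast_self, zero_mul, zero_add, Int.cast_natCast]
  · rintro (rfl | rfl)
    · exact add_zero 0
    · rw [← Nat.cast_add, natCast_self]

theorem card_filter_add_self_eq_zero {n : ℕ} [NeZero n] (hn : Even n) :
    #{a : ZMod n | a + a = 0} = 2 := by
  obtain ⟨m, rfl⟩ := hn
  have hm : 0 < m := Nat.pos_of_ne_zero fun h => NeZero.ne (m + m) (by omega)
  have hm_ne : (m : ZMod (m + m)) ≠ 0 := by
    rw [Ne, natCast_eq_zero_iff]
    intro h
    have := Nat.le_of_dvd hm h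
    omega
  rw [card_eq_two]
  exact ⟨0, m, hm_ne.symm, by ext a; simp [add_self_eq_zero_iff_of_even]⟩

end ZMod

namespace DihedralGroup

variable {n : ℕ}

theorem sum_eq_sum_r_add_sum_sr {M : Type*} [AddCommMonoid M] [NeZero n]
    (f : DihedralGroup n → M) :
    ∑ x, f x = ∑ i, f (r i) + ∑ i, f (sr i) :=
  (equivSum.symm.sum_comp f).symm.trans (Fintype.sum_sum_type _)

theorem commute_r_r (i j : ZMod n) : Commute (r i) (r j) := by
  simp only [Commute, SemiconjBy, r_mul_r, add_comm]

theorem commute_r_sr_iff {i j : ZMod n} : Commute (r i) (sr j) ↔ i + i = 0 := by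
  rw [Commute, SemiconjBy, r_mul_sr, sr_mul_r, sr.injEq, sub_eq_add_neg, add_right_inj,
    neg_eq_iff_add_eq_zero]

theorem commute_sr_r_iff {i j : ZMod n} : Commute (sr i) (r j) ↔ j + j = 0 :=
  Commute.symm_iff.trans commute_r_sr_iff

theorem commute_sr_sr_iff {i j : ZMod n} : Commute (sr i) (sr j) ↔ (i - j) + (i - j) = 0 := by
  rw [Commute, SemiconjBy, sr_mul_sr, sr_mul_sr, r.injEq, ← neg_sub i j, neg_eq_iff_add_eq_zero]

theorem card_commute [NeZero n] :
    Nat.card {p : DihedralGroup n × DihedralGroup n // Commute p.1 p.2} =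
      n * (n + 3 * #{a : ZMod n | a + a = 0}) := by
  classical
  have card_shift (i : ZMod n) : ∑ j : ZMod n, (if (i - j) + (i - j) = 0 then 1 else 0) =
      #{a : ZMod n | a + a = 0} :=
    ((Equiv.subLeft i).sum_comp fun a => if a + a = 0 then 1 else 0).trans (sum_boole _ _)
  rw [Nat.card_eq_fintype_card, Fintype.card_subtype, card_filter]
  simp only [Fintype.sum_prod_type, sum_eq_sum_r_add_sum_sr, commute_r_r, commute_r_sr_iff,
    commute_sr_r_iff, commute_sr_sr_iff, if_true, card_shift]
  simp only [sum_add_distrib, sum_const, ← smul_sum, sum_boole]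
  simp only [card_univ, ZMod.card, smul_eq_mul, Nat.cast_id]
  ring

end DihedralGroup

theorem commProb_dihedralGroup_even (n : ℕ) (hn : 4 ≤ n) (heven : Even n) :
    commProb (DihedralGroup n) = ((n : ℚ) + 6) / (4 * n) := by
  have : NeZero n := ⟨by omega⟩
  have hn0 : (n : ℚ) ≠ 0 := Nat.cast_ne_zero.mpr (NeZero.ne n)
  rw [commProb_def, DihedralGroup.card_commute, ZMod.card_filter_add_self_eq_zero heven,
    DihedralGroup.nat_card]
  push_cast
  field_simp
  ring
end

section
/- Let G be a finite non-abelian group and let p be the smallest prime dividing |G|. Then cp(G) ≤ 1/p + (p-1)/(p·[G : Z(G)]) ≤ (p² + p - 1)/p³. -/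
set_option maxHeartbeats 1000000
open ConjClasses

theorem commProb_le_of_min_prime (G : Type*) [Group G] [Finite G]
    (h : ¬ ∀ a b : G, a * b = b * a)
    (p : ℕ) (hp : p.Prime) (hpd : p ∣ Nat.card G)
    (hmin : ∀ q : ℕ, q.Prime → q ∣ Nat.card G → p ≤ q) :
    commProb G ≤ 1 / (p : ℚ) + ((p : ℚ) - 1) / ((p : ℚ) * ((Subgroup.center G).index : ℚ)) ∧
    1 / (p : ℚ) + ((p : ℚ) - 1) / ((p : ℚ) * ((Subgroup.center G).index : ℚ)) ≤
      ((p : ℚ) ^ 2 + (p : ℚ) - 1) / (p : ℚ) ^ 3 := by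
  classical
  cases nonempty_fintype G
  set n := Nat.card G with hn
  set z := Nat.card (Subgroup.center G) with hz
  set I := (Subgroup.center G).index with hIdef
  set k := Nat.card (ConjClasses G) with hk
  have hnzI : z * I = n := Subgroup.card_mul_index _
  have hn0 : 0 < n := Nat.card_pos
  have hz0 : 0 < z := Nat.card_pos
  have hI0 : 0 < I := by
    rcases Nat.eq_zero_or_pos I with h0 | h0
    · rw [h0, mul_zero] at hnzI; omega
    · exact h0
  have hp2 : 2 ≤ p := hp.two_le
  -- the set of noncentral classes
  set m := (noncenter G).toFinset.card with hm
  -- k = m + z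
  have hkmz : k = m + z := by
    have h1 : z = Fintype.card ((noncenter G)ᶜ : Set (ConjClasses G)) := by
      rw [hz, Nat.card_eq_fintype_card]
      exact Fintype.card_congr ((mk_bijOn G).equiv _)
    have h2 : Fintype.card ((noncenter G)ᶜ : Set (ConjClasses G)) =
        ((noncenter G).toFinset)ᶜ.card := by
      rw [← Set.toFinset_card, Set.toFinset_compl]
    rw [hk, Nat.card_eq_fintype_card, ← Finset.card_add_card_compl (noncenter G).toFinset,
      h1, h2]
  -- class equation
  have hclass : z + ∑ x ∈ (noncenter G).toFinset, x.carrier.toFinset.card = n := by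
    rw [hz, hn, Nat.card_eq_fintype_card, Nat.card_eq_fintype_card]
    exact Group.card_center_add_sum_card_noncenter_eq_card G
  -- each noncentral class has size at least p
  have hbig : ∀ x ∈ (noncenter G).toFinset, p ≤ x.carrier.toFinset.card := by
    intro x hx
    rw [Set.mem_toFinset, mem_noncenter] at hx
    obtain ⟨g, rfl⟩ := x.exists_rep
    have hdvd : (ConjClasses.mk g).carrier.toFinset.card ∣ n := by
      have h1 : Nat.card (MulAction.orbit (ConjAct G) g) ∣ Nat.card G := by
        rw [Nat.card_congr (MulAction.orbitEquivQuotientStabilizer (ConjAct G) g)]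
        exact (MulAction.stabilizer (ConjAct G) g).index_dvd_card
      have h2 : Nat.card (MulAction.orbit (ConjAct G) g) =
          Nat.card (ConjClasses.mk g).carrier :=
        Nat.card_congr (Equiv.setCongr (ConjAct.orbit_eq_carrier_conjClasses g))
      rwa [h2, Nat.card_coe_set_eq, Set.ncard_eq_toFinset_card'] at h1
    obtain ⟨a, ha, b, hb, hab⟩ := hx
    have h1lt : 1 < (ConjClasses.mk g).carrier.toFinset.card :=
      Finset.one_lt_card.mpr ⟨a, Set.mem_toFinset.mpr ha, b, Set.mem_toFinset.mpr hb, hab⟩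
    set c := (ConjClasses.mk g).carrier.toFinset.card
    have hq : c.minFac.Prime := Nat.minFac_prime (by omega)
    calc p ≤ c.minFac := hmin _ hq ((Nat.minFac_dvd c).trans hdvd)
    _ ≤ c := Nat.minFac_le (by omega)
  have hsum : p * m ≤ ∑ x ∈ (noncenter G).toFinset, x.carrier.toFinset.card := by
    calc p * m = ∑ _x ∈ (noncenter G).toFinset, p := by rw [Finset.sum_const, smul_eq_mul, mul_comm]
    _ ≤ _ := Finset.sum_le_sum hbig
  -- key counting inequality
  have hkey : p * k + z ≤ n + p * z := by
    have : p * m ≤ n - z := by omega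
    nlinarith
  -- index is at least p^2
  have hIp2 : p * p ≤ I := by
    by_contra hlt
    push_neg at hlt
    have hIdvd : I ∣ n := Dvd.intro_left _ hnzI
    have hI1 : I ≠ 1 := by
      intro h1
      apply h
      have : Subgroup.center G = ⊤ := Subgroup.index_eq_one.mp h1
      intro a b
      have hb : b ∈ Subgroup.center G := this ▸ Subgroup.mem_top b
      exact Subgroup.mem_center_iff.mp hb a
    have hq : I.minFac.Prime := Nat.minFac_prime hI1
    have hpq : p ≤ I.minFac := hmin _ hq ((Nat.minFac_dvd I).trans hIdvd)
    set q := I.minFac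
    obtain ⟨r, hr⟩ := I.minFac_dvd
    have hr0 : r ≠ 0 := by rintro rfl; rw [mul_zero] at hr; omega
    rcases Nat.eq_or_lt_of_le (Nat.one_le_iff_ne_zero.mpr hr0) with hr1 | hr1
    · -- I = q prime, so G/Z(G) is cyclic, so G is abelian
      have hIq : I = q := by rw [hr, ← hr1, mul_one]
      have : Nat.card (G ⧸ Subgroup.center G) = q := hIq
      have : IsCyclic (G ⧸ Subgroup.center G) :=
        isCyclic_of_prime_card (p := q) (hp := ⟨hq⟩) this
      exact h fun a b => commutative_of_cyclic_center_quotient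
        (QuotientGroup.mk' (Subgroup.center G)) (by rw [QuotientGroup.ker_mk']) a b
    · -- r > 1, so r has a prime factor ≥ p, so I ≥ p^2
      have hrq : r.minFac.Prime := Nat.minFac_prime (by omega)
      have hpr : p ≤ r.minFac :=
        hmin _ hrq (((Nat.minFac_dvd r).trans (Dvd.intro_left q hr.symm)).trans hIdvd)
      have : p ≤ r := le_trans hpr (Nat.minFac_le (by omega))
      nlinarith
  -- now the rational arithmetic
  have hp0 : (0:ℚ) < p := by exact_mod_cast hp.pos
  have hnQ : (0:ℚ) < n := by exact_mod_cast hn0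
  have hzQ : (0:ℚ) < z := by exact_mod_cast hz0
  have hIQ : (0:ℚ) < I := by exact_mod_cast hI0
  have hnzIQ : (z:ℚ) * I = n := by exact_mod_cast hnzI
  constructor
  · rw [commProb_def', ← hn, ← hk]
    have h1 : (k:ℚ)/n ≤ ((n:ℚ) + ((p:ℚ)-1)*z)/((p:ℚ)*n) := by
      rw [div_le_div_iff₀ hnQ (by positivity)]
      have hkeyQ : (p:ℚ) * k + z ≤ n + p * z := by exact_mod_cast hkey
      nlinarith
    have h2 : ((n:ℚ) + ((p:ℚ)-1)*z)/((p:ℚ)*n) = 1/(p:ℚ) + ((p:ℚ)-1)/((p:ℚ)*I) := by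
      rw [← hnzIQ]
      field_simp
    rw [← h2]; exact h1
  · have hIp2Q : (p:ℚ)^2 ≤ I := by
      have : ((p*p : ℕ) : ℚ) ≤ I := by exact_mod_cast hIp2
      push_cast at this; nlinarith
    have h3 : ((p:ℚ)^2 + (p:ℚ) - 1)/(p:ℚ)^3 = 1/(p:ℚ) + ((p:ℚ)-1)/((p:ℚ)*(p:ℚ)^2) := by
      field_simp; ring
    rw [h3]
    have h1p : (1:ℚ) ≤ p := by exact_mod_cast hp.one_le
    have key : ((p:ℚ)-1)/((p:ℚ)*I) ≤ ((p:ℚ)-1)/((p:ℚ)*(p:ℚ)^2) :=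
      div_le_div_of_nonneg_left (by linarith) (by positivity) (by nlinarith)
    linarith
end

section
/- Let G be a finite group and H a normal subgroup of G. Then cp(G) ≤ cp(G/H). -/
/-!
As a set, `G` is in bijection with `(G ⧸ H) × H`, the first coordinate being the quotient map.
A commuting pair in `G` projects to a commuting pair in
`G ⧸ H`, so the commuting pairs of `G` inject into the commuting pairs of `G ⧸ H` times `H × H`.
Dividing by `|G|² = |G ⧸ H|² |H|²` gives the inequality.
-/

lemma Nat.card_subtype_le_mul_of_equiv_prod {α β γ : Type*} [Finite β] [Finite γ]
    (e : α ≃ β × γ) {p : α → Prop} {q : β → Prop} (h : ∀ a, p a → q (e a).1) :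
    Nat.card {a // p a} ≤ Nat.card {b // q b} * Nat.card γ := by
  rw [← Nat.card_prod]
  refine Nat.card_le_card_of_injective (fun a ↦ (⟨(e a.1).1, h a.1 a.2⟩, (e a.1).2)) ?_
  intro a a' haa'
  simp only [Prod.mk.injEq, Subtype.mk.injEq] at haa'
  exact Subtype.ext (e.injective (Prod.ext haa'.1 haa'.2))

namespace QuotientGroup

lemma card_commute_le_card_commute_quotient_mul {G : Type*} [Group G] [Finite G]
    (H : Subgroup G) [H.Normal] :
    Nat.card {p : G × G // Commute p.1 p.2} ≤
      Nat.card {q : (G ⧸ H) × (G ⧸ H) // Commute q.1 q.2} * Nat.card H ^ 2 := by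
  let e : G ≃ (G ⧸ H) × H := Subgroup.groupEquivQuotientProdSubgroup
  rw [sq, ← Nat.card_prod]
  -- The first component of `e g` is `(g : G ⧸ H)` definitionally.
  exact Nat.card_subtype_le_mul_of_equiv_prod
    ((e.prodCongr e).trans (Equiv.prodProdProdComm _ _ _ _)) fun p hp ↦ hp.map (mk' H)

end QuotientGroup

theorem commProb_le_commProb_quotient (G : Type*) [Group G] [Finite G]
    (H : Subgroup G) [H.Normal] :
    commProb G ≤ commProb (G ⧸ H) := by
  have hcard : (Nat.card G : ℚ) = Nat.card (G ⧸ H) * Nat.card H := by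
    exact_mod_cast H.card_eq_card_quotient_mul_card_subgroup
  have hQ : (0 : ℚ) < Nat.card (G ⧸ H) := Nat.cast_pos.mpr Nat.card_pos
  have hH : (0 : ℚ) < Nat.card H := Nat.cast_pos.mpr Nat.card_pos
  have hcomm : (Nat.card {p : G × G // Commute p.1 p.2} : ℚ) ≤
      Nat.card {q : (G ⧸ H) × (G ⧸ H) // Commute q.1 q.2} * Nat.card H ^ 2 := by
    exact_mod_cast QuotientGroup.card_commute_le_card_commute_quotient_mul H
  rw [commProb_def, commProb_def, hcard, mul_pow, div_le_div_iff₀ (by positivity) (by positivity)]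
  calc _ ≤ (Nat.card {q : (G ⧸ H) × (G ⧸ H) // Commute q.1 q.2} * Nat.card H ^ 2 : ℚ) *
        Nat.card (G ⧸ H) ^ 2 := by gcongr
    _ = _ := by ring
end

section
/- Let G be a finite group and H a normal subgroup of G such that cp(G) = cp(G/H). Then H is contained in the center Z(G). -/
theorem le_center_of_commProb_eq_quotient (G : Type*) [Group G] [Finite G]
    (H : Subgroup G) [H.Normal] (h : commProb G = commProb (G ⧸ H)) :
    H ≤ Subgroup.center G := by
  classical
  have hGpos : (0 : ℚ) < Nat.card G := by exact_mod_cast Nat.card_pos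
  have hcard : Nat.card G = Nat.card (G ⧸ H) * Nat.card H :=
    Subgroup.card_eq_card_quotient_mul_card_subgroup H
  -- cardinality equation from the hypothesis
  have key : Nat.card { p : G × G // Commute p.1 p.2 } =
      Nat.card { p : (G ⧸ H) × (G ⧸ H) // Commute p.1 p.2 } * (Nat.card H * Nat.card H) := by
    have h1 := h
    rw [commProb_def, commProb_def] at h1
    have hQpos : (0 : ℚ) < Nat.card (G ⧸ H) := by exact_mod_cast Nat.card_pos
    have hHpos : (0 : ℚ) < Nat.card H := by exact_mod_cast Nat.card_pos
    have h2 : (Nat.card { p : G × G // Commute p.1 p.2 } : ℚ) =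
        (Nat.card { p : (G ⧸ H) × (G ⧸ H) // Commute p.1 p.2 } : ℚ) *
          (Nat.card H * Nat.card H) := by
      have hGc : (Nat.card G : ℚ) = Nat.card (G ⧸ H) * Nat.card H := by
        exact_mod_cast hcard
      rw [div_eq_div_iff (pow_ne_zero 2 hGpos.ne') (pow_ne_zero 2 hQpos.ne')] at h1
      apply mul_right_cancel₀ (pow_ne_zero 2 hQpos.ne')
      rw [h1, hGc]
      ring
    exact_mod_cast h2
  -- define the injection
  set f : { p : G × G // Commute p.1 p.2 } →
      { p : (G ⧸ H) × (G ⧸ H) // Commute p.1 p.2 } × H × H :=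
    fun p => ⟨⟨((p.1.1 : G ⧸ H), (p.1.2 : G ⧸ H)), p.2.map (QuotientGroup.mk' H)⟩,
      ⟨((p.1.1 : G ⧸ H)).out⁻¹ * p.1.1, QuotientGroup.eq.mp (QuotientGroup.out_eq' _)⟩,
      ⟨((p.1.2 : G ⧸ H)).out⁻¹ * p.1.2, QuotientGroup.eq.mp (QuotientGroup.out_eq' _)⟩⟩
    with hf
  have hinj : Function.Injective f := by
    rintro ⟨⟨a, b⟩, hab⟩ ⟨⟨c, d⟩, hcd⟩ he
    simp only [hf, Prod.mk.injEq, Subtype.mk.injEq, Subtype.ext_iff] at he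
    obtain ⟨⟨h1, h2⟩, h3, h4⟩ := he
    have ha : a = c := by
      have := h3
      rw [h1] at this
      exact mul_left_cancel this
    have hb : b = d := by
      have := h4
      rw [h2] at this
      exact mul_left_cancel this
    simp [ha, hb]
  have hbij : Function.Bijective f := by
    rw [Nat.bijective_iff_injective_and_card]
    refine ⟨hinj, ?_⟩
    rw [key, Nat.card_prod, Nat.card_prod]
  -- non-surjectivity witness
  by_contra hc
  simp only [SetLike.le_def] at hc
  push_neg at hc
  obtain ⟨n, hnH, hnc⟩ := hc
  rw [Subgroup.mem_center_iff] at hnc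
  push_neg at hnc
  obtain ⟨x, hx⟩ := hnc
  have hout1 : (1 : G ⧸ H).out ∈ H := by
    rw [← QuotientGroup.eq_one_iff]
    exact QuotientGroup.out_eq' _
  have hmem2 : (1 : G ⧸ H).out⁻¹ * n ∈ H := H.mul_mem (H.inv_mem hout1) hnH
  obtain ⟨⟨⟨a, b⟩, hab⟩, hfp⟩ := hbij.2
    ⟨⟨((x : G ⧸ H), (1 : G ⧸ H)), Commute.one_right _⟩,
      ⟨((x : G ⧸ H)).out⁻¹ * x, QuotientGroup.eq.mp (QuotientGroup.out_eq' _)⟩,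
      ⟨(1 : G ⧸ H).out⁻¹ * n, hmem2⟩⟩
  simp only [hf, Prod.mk.injEq, Subtype.mk.injEq, Subtype.ext_iff] at hfp
  obtain ⟨⟨h1, h2⟩, h3, h4⟩ := hfp
  have ha : a = x := by
    rw [h1] at h3
    exact mul_left_cancel h3
  have hb : b = n := by
    rw [h2] at h4
    exact mul_left_cancel h4
  rw [ha, hb] at hab
  exact hx hab
end

section
/- Let G be a finite group and H ≤ G a subgroup. Then cp(H) ≥ cp(G). -/
open Subgroup

-- key lemma: |K| * |H| ≤ |K.subgroupOf H| * |G|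
lemma aux_card_le (G : Type*) [Group G] [Finite G] (K H : Subgroup G) :
    Nat.card K * Nat.card H ≤ Nat.card (K.subgroupOf H) * Nat.card G := by
  have h1 : Nat.card (K.subgroupOf H) * K.relIndex H = Nat.card H :=
    (K.subgroupOf H).card_mul_index
  have h2 : Nat.card K * K.index = Nat.card G := K.card_mul_index
  have h3 : K.relIndex H ≤ K.index := by
    have hne : K.relIndex ⊤ ≠ 0 := by
      rw [Subgroup.relIndex_top_right]
      exact Subgroup.index_ne_zero_of_finite
    have := Subgroup.relIndex_le_of_le_right (le_top : H ≤ ⊤) hne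
    simpa [Subgroup.relIndex_top_right] using this
  calc Nat.card K * Nat.card H = Nat.card K * (Nat.card (K.subgroupOf H) * K.relIndex H) := by
        rw [h1]
    _ ≤ Nat.card K * (Nat.card (K.subgroupOf H) * K.index) := by
        exact Nat.mul_le_mul_left _ (Nat.mul_le_mul_left _ h3)
    _ = Nat.card (K.subgroupOf H) * (Nat.card K * K.index) := by ring
    _ = Nat.card (K.subgroupOf H) * Nat.card G := by rw [h2]

theorem commProb_subgroup_ge (G : Type*) [Group G] [Finite G] (H : Subgroup G) :
    commProb H ≥ commProb G := by
  classical
  have := Fintype.ofFinite G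
  -- counting functions
  set cG : G → ℕ := fun x => Nat.card {y : G // Commute x y} with hcG
  set cH : G → ℕ := fun x => Nat.card {y : H // Commute x ↑y} with hcH
  -- pointwise inequality
  have key : ∀ x : G, cG x * Nat.card H ≤ cH x * Nat.card G := by
    intro x
    have e1 : cG x = Nat.card (Subgroup.centralizer {x} : Subgroup G) := by
      apply Nat.card_congr
      exact Equiv.subtypeEquivRight fun y => by
        simp [Subgroup.mem_centralizer_singleton_iff, Commute, SemiconjBy, eq_comm]
    have e2 : cH x = Nat.card ((Subgroup.centralizer {x}).subgroupOf H) := by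
      apply Nat.card_congr
      exact Equiv.subtypeEquivRight fun y => by
        simp [Subgroup.mem_subgroupOf, Subgroup.mem_centralizer_singleton_iff, Commute,
          SemiconjBy, eq_comm]
    rw [e1, e2]
    exact aux_card_le G _ H
  -- counts of commuting pairs
  have hNG : Nat.card {p : G × G // Commute p.1 p.2} = ∑ x : G, cG x := by
    rw [Nat.card_congr (Equiv.subtypeProdEquivSigmaSubtype Commute), Nat.card_eq_fintype_card,
      Fintype.card_sigma]
    simp [hcG, Nat.card_eq_fintype_card]
  have hNH : Nat.card {p : H × H // Commute p.1 p.2} = ∑ x : H, cH (x : G) := by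
    rw [Nat.card_congr (Equiv.subtypeProdEquivSigmaSubtype Commute), Nat.card_eq_fintype_card,
      Fintype.card_sigma]
    refine Finset.sum_congr rfl fun x _ => ?_
    simp only [hcH, Nat.card_eq_fintype_card]
    exact Fintype.card_congr (Equiv.subtypeEquivRight fun y => by
      simp [Commute, SemiconjBy, Subtype.ext_iff])
  -- the mixed count, both ways
  have hC1 : Nat.card {p : H × G // Commute (p.1 : G) p.2} = ∑ x : H, cG (x : G) := by
    rw [Nat.card_congr (Equiv.subtypeProdEquivSigmaSubtype fun (a : H) (b : G) => Commute (a : G) b),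
      Nat.card_eq_fintype_card, Fintype.card_sigma]
    simp [hcG, Nat.card_eq_fintype_card]
  have hC2 : Nat.card {p : H × G // Commute (p.1 : G) p.2} = ∑ y : G, cH y := by
    have e : {p : H × G // Commute (p.1 : G) p.2} ≃ {p : G × H // Commute p.1 (p.2 : G)} :=
      ⟨fun p => ⟨⟨p.1.2, p.1.1⟩, p.2.symm⟩, fun p => ⟨⟨p.1.2, p.1.1⟩, p.2.symm⟩,
        fun p => rfl, fun p => rfl⟩
    rw [Nat.card_congr e,
      Nat.card_congr (Equiv.subtypeProdEquivSigmaSubtype fun (a : G) (b : H) => Commute a (b : G)),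
      Nat.card_eq_fintype_card, Fintype.card_sigma]
    simp [hcH, Nat.card_eq_fintype_card]
  -- combine
  set NG := Nat.card {p : G × G // Commute p.1 p.2}
  set NH := Nat.card {p : H × H // Commute p.1 p.2}
  set C := Nat.card {p : H × G // Commute (p.1 : G) p.2}
  have h1 : NG * Nat.card H ≤ C * Nat.card G := by
    rw [hNG, hC2, Finset.sum_mul, Finset.sum_mul]
    exact Finset.sum_le_sum fun x _ => key x
  have h2 : C * Nat.card H ≤ NH * Nat.card G := by
    rw [hC1, hNH, Finset.sum_mul, Finset.sum_mul]
    exact Finset.sum_le_sum fun x _ => key (x : G)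
  have hmain : NG * Nat.card H ^ 2 ≤ NH * Nat.card G ^ 2 := by
    calc NG * Nat.card H ^ 2 = (NG * Nat.card H) * Nat.card H := by ring
      _ ≤ (C * Nat.card G) * Nat.card H := Nat.mul_le_mul_right _ h1
      _ = (C * Nat.card H) * Nat.card G := by ring
      _ ≤ (NH * Nat.card G) * Nat.card G := Nat.mul_le_mul_right _ h2
      _ = NH * Nat.card G ^ 2 := by ring
  have hGpos : (0 : ℚ) < (Nat.card G : ℚ) := by exact_mod_cast Nat.card_pos
  have hHpos : (0 : ℚ) < (Nat.card H : ℚ) := by exact_mod_cast Nat.card_pos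
  rw [ge_iff_le, commProb_def, commProb_def,
    div_le_div_iff₀ (pow_pos hGpos 2) (pow_pos hHpos 2)]
  calc (NG : ℚ) * (Nat.card H : ℚ) ^ 2 = ((NG * Nat.card H ^ 2 : ℕ) : ℚ) := by push_cast; ring
    _ ≤ ((NH * Nat.card G ^ 2 : ℕ) : ℚ) := by exact_mod_cast hmain
    _ = (NH : ℚ) * (Nat.card G : ℚ) ^ 2 := by push_cast; ring
end

section
/- Let G be a finite group and H a normal subgroup. Then cp(G) ≤ cp(H) · cp(G/H). -/
/-!
Send a commuting pair `(x, y)` of `G` to the commuting pair `(xH, yH)` of `G ⧸ H`. Over a fixed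
pair of cosets `(aH, bH)` there are at most as many commuting pairs as in `H × H`: for fixed `x`,
the elements of `bH` commuting with `x` are empty or a coset of `C(x) ∩ H`, so replacing `bH` by
`H`, and then by symmetry `aH` by `H`, can only increase the count. Dividing the resulting bound
on commuting pairs by `|G|² = |H|² |G ⧸ H|²` gives the inequality.
-/

section

variable {G : Type*} [Group G]

theorem Nat.card_le_card_mul_of_card_fiber_le {α β : Type*} [Finite α] [Finite β] (f : α → β)
    {n : ℕ} (hf : ∀ b, Nat.card {a // f a = b} ≤ n) : Nat.card α ≤ n * Nat.card β := by
  have := Fintype.ofFinite β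
  calc Nat.card α = ∑ b, Nat.card {a // f a = b} :=
        (Nat.card_congr (Equiv.sigmaFiberEquiv f).symm).trans Nat.card_sigma
    _ ≤ ∑ _b : β, n := Finset.sum_le_sum fun b _ => hf b
    _ = n * Nat.card β := by simp [mul_comm]

theorem Nat.card_subtype_prod {α β : Type*} [Fintype α] [Finite β] (p : α → β → Prop) :
    Nat.card {c : α × β // p c.1 c.2} = ∑ a, Nat.card {b // p a b} :=
  (Nat.card_congr (Equiv.subtypeProdEquivSigmaSubtype p)).trans Nat.card_sigma

/-- The elements of a coset of `H` commuting with `x`, if any, form a coset of `H ∩ C(x)`. -/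
theorem Subgroup.card_commute_mem_coset_le [Finite G] (H : Subgroup G) (x : G) (q : G ⧸ H) :
    Nat.card {y : G // (y : G ⧸ H) = q ∧ Commute x y} ≤
      Nat.card {y : G // y ∈ H ∧ Commute x y} := by
  rcases isEmpty_or_nonempty {y : G // (y : G ⧸ H) = q ∧ Commute x y} with h | ⟨c, hcq, hxc⟩
  · simp
  refine Nat.card_le_card_of_injective
    (fun y => ⟨c⁻¹ * y, QuotientGroup.eq.mp (hcq.trans y.2.1.symm),
      hxc.inv_right.mul_right y.2.2⟩) ?_
  intro y z h
  exact Subtype.ext (mul_left_cancel (congrArg Subtype.val h))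

namespace Subgroup

variable (H : Subgroup G)

noncomputable def commPairsOver (a b : G ⧸ H) : ℕ :=
  Nat.card {p : G × G // (p.1 : G ⧸ H) = a ∧ (p.2 : G ⧸ H) = b ∧ Commute p.1 p.2}

theorem commPairsOver_comm (a b : G ⧸ H) : H.commPairsOver a b = H.commPairsOver b a :=
  Nat.card_congr
    { toFun p := ⟨p.1.swap, p.2.2.1, p.2.1, p.2.2.2.symm⟩
      invFun p := ⟨p.1.swap, p.2.2.1, p.2.1, p.2.2.2.symm⟩ }

variable [H.Normal]

theorem commPairsOver_le_one [Finite G] (a b : G ⧸ H) :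
    H.commPairsOver a b ≤ H.commPairsOver a 1 := by
  have := Fintype.ofFinite G
  rw [commPairsOver, commPairsOver,
    Nat.card_subtype_prod fun x y : G => (x : G ⧸ H) = a ∧ (y : G ⧸ H) = b ∧ Commute x y,
    Nat.card_subtype_prod fun x y : G => (x : G ⧸ H) = a ∧ (y : G ⧸ H) = 1 ∧ Commute x y]
  gcongr with x
  by_cases hx : (x : G ⧸ H) = a
  · simpa [hx, QuotientGroup.eq_one_iff] using H.card_commute_mem_coset_le x b
  · simp [hx]

theorem commPairsOver_one_one :
    H.commPairsOver 1 1 = Nat.card {p : H × H // Commute p.1 p.2} :=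
  Nat.card_congr
    { toFun p := ⟨(⟨p.1.1, (QuotientGroup.eq_one_iff _).1 p.2.1⟩,
          ⟨p.1.2, (QuotientGroup.eq_one_iff _).1 p.2.2.1⟩), Subtype.ext p.2.2.2⟩
      invFun p := ⟨(p.1.1, p.1.2), (QuotientGroup.eq_one_iff _).2 p.1.1.2,
          (QuotientGroup.eq_one_iff _).2 p.1.2.2, congrArg Subtype.val p.2⟩ }

theorem commPairsOver_le [Finite G] (a b : G ⧸ H) :
    H.commPairsOver a b ≤ Nat.card {p : H × H // Commute p.1 p.2} :=
  calc H.commPairsOver a b ≤ H.commPairsOver a 1 := H.commPairsOver_le_one a b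
    _ = H.commPairsOver 1 a := H.commPairsOver_comm a 1
    _ ≤ H.commPairsOver 1 1 := H.commPairsOver_le_one 1 a
    _ = _ := H.commPairsOver_one_one

theorem card_commute_le_mul_quotient [Finite G] :
    Nat.card {p : G × G // Commute p.1 p.2} ≤
      Nat.card {p : H × H // Commute p.1 p.2} *
        Nat.card {p : (G ⧸ H) × (G ⧸ H) // Commute p.1 p.2} := by
  refine Nat.card_le_card_mul_of_card_fiber_le
    (fun p => ⟨((p.1.1 : G ⧸ H), (p.1.2 : G ⧸ H)), p.2.map (QuotientGroup.mk' H)⟩) fun q => ?_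
  refine le_trans (Nat.card_le_card_of_injective
    (fun p => ⟨p.1.1, congrArg (·.1.1) p.2, congrArg (·.1.2) p.2, p.1.2⟩) ?_)
    (H.commPairsOver_le q.1.1 q.1.2)
  intro p p' h
  exact Subtype.ext (Subtype.ext (by simpa using congrArg Subtype.val h))

end Subgroup

end

theorem commProb_le_mul_quotient (G : Type*) [Group G] [Finite G]
    (H : Subgroup G) [H.Normal] :
    commProb G ≤ commProb H * commProb (G ⧸ H) := by
  have hQ : (0 : ℚ) < Nat.card (G ⧸ H) := mod_cast Nat.card_pos
  have hH : (0 : ℚ) < Nat.card H := mod_cast Nat.card_pos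
  have hG : (Nat.card G : ℚ) = Nat.card (G ⧸ H) * Nat.card H :=
    mod_cast H.card_eq_card_quotient_mul_card_subgroup
  simp only [commProb_def, hG, div_mul_div_comm]
  rw [mul_pow, mul_comm ((Nat.card H : ℚ) ^ 2), div_le_div_iff_of_pos_right (by positivity)]
  exact_mod_cast H.card_commute_le_mul_quotient
end

section
/- Let G and H be finite groups and let A = G ⋉ H be a semidirect product of H by G (with H normal). Then cp(A) ≤ cp(G) · cp(H). -/
open SemidirectProduct Finset

section aux
variable {G H : Type*} [Group G] [Group H] (φ : G →* MulAut H)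

/-- equiv to product -/
def sdpEquiv : (H ⋊[φ] G) ≃ H × G where
  toFun a := (a.left, a.right)
  invFun p := ⟨p.1, p.2⟩
  left_inv _ := rfl
  right_inv _ := rfl

lemma sdp_finite [Finite G] [Finite H] : Finite (H ⋊[φ] G) :=
  Finite.of_equiv _ (sdpEquiv φ).symm

lemma nat_card_subtype_prod {α β : Type*} [Fintype α] [Finite β] (p : α → β → Prop) :
    Nat.card {x : α × β // p x.1 x.2} = ∑ a : α, Nat.card {b : β // p a b} := by
  classical
  rw [Nat.card_congr (Equiv.subtypeProdEquivSigmaSubtype p)]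
  letI : ∀ a, Fintype {b : β // p a b} := fun _ => Fintype.ofFinite _
  rw [Nat.card_eq_fintype_card, Fintype.card_sigma]
  simp [Nat.card_eq_fintype_card]

/-- centralizer splitting bound -/
lemma aux1 [Finite G] [Finite H] (a : H ⋊[φ] G) :
    Nat.card {b : H ⋊[φ] G // Commute a b} ≤
      Nat.card {x : G // Commute a.right x} * Nat.card {m : H // Commute (inl m) a} := by
  classical
  haveI := sdp_finite φ
  let s : G → H ⋊[φ] G := fun x => if hx : ∃ b : H ⋊[φ] G, Commute a b ∧ b.right = x then hx.choose else 1
  have hs : ∀ x : G, (∃ b : H ⋊[φ] G, Commute a b ∧ b.right = x) →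
      Commute a (s x) ∧ (s x).right = x := by
    intro x hx
    simpa [s, dif_pos hx] using hx.choose_spec
  rw [← Nat.card_prod]
  apply Nat.card_le_card_of_injective
    (f := fun b : {b : H ⋊[φ] G // Commute a b} =>
      (⟨⟨b.1.right, by
          have := b.2.map (rightHom : H ⋊[φ] G →* G)
          simpa using this⟩,
        ⟨((s b.1.right)⁻¹ * b.1).left, by
          have hex : ∃ b' : H ⋊[φ] G, Commute a b' ∧ b'.right = b.1.right := ⟨b.1, b.2, rfl⟩
          obtain ⟨hc, hr⟩ := hs _ hex
          have hcc : Commute a ((s b.1.right)⁻¹ * b.1) := (hc.inv_right).mul_right b.2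
          have hrr : ((s b.1.right)⁻¹ * b.1).right = 1 := by simp [hr]
          have heq : inl (((s b.1.right)⁻¹ * b.1).left) = (s b.1.right)⁻¹ * b.1 := by
            ext <;> simp [hrr]
          rw [heq]; exact hcc.symm⟩⟩ :
        {x : G // Commute a.right x} × {m : H // Commute (inl m) a}))
  rintro ⟨b, hb⟩ ⟨b', hb'⟩ h
  simp only [Prod.mk.injEq, Subtype.mk.injEq] at h
  obtain ⟨hr, hl⟩ := h
  replace hr : b.right = b'.right := congrArg Subtype.val hr
  have hss : s b.right = s b'.right := by rw [hr]
  have h1 : ((s b.right)⁻¹ * b) = ((s b'.right)⁻¹ * b') := by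
    ext
    · exact hl
    · simp [hr, hss]
  have : b = b' := by
    have := congrArg (fun z => s b.right * z) h1
    simpa [hss, mul_assoc] using this
  simpa using this

/-- coset bound in H -/
lemma aux2 [Finite H] (g : G) (m : H) :
    Nat.card {h : H // m * h = h * φ g m} ≤ Nat.card {c : H // Commute (φ g m) c} := by
  classical
  by_cases hne : Nonempty {h : H // m * h = h * φ g m}
  · obtain ⟨⟨h0, hh0⟩⟩ := hne
    apply Nat.card_le_card_of_injective
      (f := fun h : {h : H // m * h = h * φ g m} =>
        (⟨h0⁻¹ * h.1, by
          obtain ⟨h, hh⟩ := h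
          have key : h0 * (φ g m * (h0⁻¹ * h)) = h0 * (h0⁻¹ * h * φ g m) := by
            simp only [← mul_assoc]
            rw [← hh0]
            simp [mul_assoc, hh]
          exact mul_left_cancel key⟩ : {c : H // Commute (φ g m) c}))
    rintro ⟨h, hh⟩ ⟨h', hh'⟩ hhh
    simp only [Subtype.mk.injEq, mul_right_inj] at hhh
    simpa using hhh
  · rw [not_nonempty_iff] at hne
    simp [Nat.card_of_isEmpty]
end aux

section main
variable {G H : Type*} [Group G] [Group H] (φ : G →* MulAut H)

lemma key_card [Finite G] [Finite H] :
    Nat.card {p : (H ⋊[φ] G) × (H ⋊[φ] G) // Commute p.1 p.2} ≤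
      Nat.card {p : G × G // Commute p.1 p.2} * Nat.card {p : H × H // Commute p.1 p.2} := by
  classical
  haveI := sdp_finite φ
  letI : Fintype G := Fintype.ofFinite G
  letI : Fintype H := Fintype.ofFinite H
  letI : Fintype (H ⋊[φ] G) := Fintype.ofFinite _
  rw [nat_card_subtype_prod (fun a b : H ⋊[φ] G => Commute a b),
    nat_card_subtype_prod (fun a b : G => Commute a b),
    nat_card_subtype_prod (fun a b : H => Commute a b)]
  calc ∑ a : H ⋊[φ] G, Nat.card {b : H ⋊[φ] G // Commute a b}
      ≤ ∑ a : H ⋊[φ] G,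
          Nat.card {x : G // Commute a.right x} * Nat.card {m : H // Commute (inl m) a} :=
        Finset.sum_le_sum fun a _ => aux1 φ a
    _ = ∑ p : H × G,
          Nat.card {x : G // Commute p.2 x} *
            Nat.card {m : H // Commute (inl m) (⟨p.1, p.2⟩ : H ⋊[φ] G)} := by
        apply Fintype.sum_equiv (sdpEquiv φ)
        intro a
        rfl
    _ = ∑ h : H, ∑ g : G,
          Nat.card {x : G // Commute g x} *
            Nat.card {m : H // Commute (inl m) (⟨h, g⟩ : H ⋊[φ] G)} := by
        exact Fintype.sum_prod_type
          (f := fun p : H × G => Nat.card {x : G // Commute p.2 x} *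
            Nat.card {m : H // Commute (inl m) (⟨p.1, p.2⟩ : H ⋊[φ] G)})
    _ = ∑ g : G, ∑ h : H,
          Nat.card {x : G // Commute g x} *
            Nat.card {m : H // Commute (inl m) (⟨h, g⟩ : H ⋊[φ] G)} := Finset.sum_comm
    _ ≤ ∑ g : G, Nat.card {x : G // Commute g x} *
          (∑ b : H, Nat.card {c : H // Commute b c}) := by
        apply Finset.sum_le_sum
        intro g _
        rw [← Finset.mul_sum]
        apply Nat.mul_le_mul_left
        calc ∑ h : H, Nat.card {m : H // Commute (inl m) (⟨h, g⟩ : H ⋊[φ] G)}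
            = ∑ h : H, Nat.card {m : H // m * h = h * φ g m} := by
              apply Finset.sum_congr rfl
              intro h _
              apply Nat.card_congr
              apply Equiv.subtypeEquivRight
              intro m
              constructor
              · intro hc
                have := congrArg SemidirectProduct.left hc
                simpa using this
              · intro hc
                ext <;> simp [hc]
          _ = Nat.card {p : H × H // p.2 * p.1 = p.1 * φ g p.2} :=
              (nat_card_subtype_prod (fun h m : H => m * h = h * φ g m)).symm
          _ = Nat.card {p : H × H // p.1 * p.2 = p.2 * φ g p.1} :=
              Nat.card_congr ⟨fun x => ⟨(x.1.2, x.1.1), x.2⟩, fun x => ⟨(x.1.2, x.1.1), x.2⟩,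
                fun _ => rfl, fun _ => rfl⟩
          _ = ∑ m : H, Nat.card {h : H // m * h = h * φ g m} :=
              nat_card_subtype_prod (fun m h : H => m * h = h * φ g m)
          _ ≤ ∑ m : H, Nat.card {c : H // Commute (φ g m) c} :=
              Finset.sum_le_sum fun m _ => aux2 φ g m
          _ = ∑ b : H, Nat.card {c : H // Commute b c} := by
              apply Fintype.sum_equiv (φ g).toEquiv
              intro m
              rfl
    _ = (∑ a : G, Nat.card {b : G // Commute a b}) *
          (∑ a : H, Nat.card {b : H // Commute a b}) := by rw [← Finset.sum_mul]

end main

theorem commProb_semidirectProduct_le (G H : Type*) [Group G] [Group H]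
    [Finite G] [Finite H] (φ : G →* MulAut H) :
    commProb (SemidirectProduct H G φ) ≤ commProb G * commProb H := by
  haveI := sdp_finite φ
  have hA : Nat.card (H ⋊[φ] G) = Nat.card H * Nat.card G := by
    rw [Nat.card_congr (sdpEquiv φ), Nat.card_prod]
  rw [commProb_def, commProb_def, commProb_def, div_mul_div_comm, hA]
  have hG : 0 < (Nat.card G : ℚ) := by exact_mod_cast Nat.card_pos
  have hH : 0 < (Nat.card H : ℚ) := by exact_mod_cast Nat.card_pos
  rw [show ((Nat.card H * Nat.card G : ℕ) : ℚ) ^ 2 = (Nat.card G : ℚ) ^ 2 * (Nat.card H : ℚ) ^ 2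
    by push_cast; ring]
  gcongr
  exact_mod_cast key_card φ
end

section
/- Let G be a finite non-abelian group of order n and let p be the smallest prime dividing n. Then the number of conjugacy classes of G is at least p·|Z(G)| + 1. -/
/-! By Burnside's lemma for the conjugation action, `k(G) |G| = ∑ g, |C_G(g)|`. A central `g`
contributes `|G|`. For a non-central `g` the centralizer properly contains `Z(G)`, so its index
over `Z(G)` is a divisor of `|G|` other than `1`, hence at least `p`, and `|C_G(g)| ≥ p |Z(G)|`.
Thus `k(G) |G| ≥ |Z(G)| |G| + (|G| - |Z(G)|) p |Z(G)|`, which exceeds `p |Z(G)| |G|` exactly when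
`p |Z(G)| < |G|`. This holds because `[G : Z(G)]` divides `|G|` and is neither `1` nor a prime
(`G / Z(G)` is never nontrivial cyclic), so it exceeds `p`. -/

open Subgroup

theorem Nat.le_minFac_of_forall_prime_dvd_le {p m n : ℕ}
    (hmin : ∀ q : ℕ, q.Prime → q ∣ n → p ≤ q) (hm : m ∣ n) (hm1 : m ≠ 1) : p ≤ m.minFac :=
  hmin _ (Nat.minFac_prime hm1) ((Nat.minFac_dvd m).trans hm)

theorem Subgroup.not_prime_index_center (G : Type*) [Group G] : ¬ (center G).index.Prime := by
  intro hprime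
  have : Fact (center G).index.Prime := ⟨hprime⟩
  have : IsCyclic (G ⧸ center G) := isCyclic_of_prime_card (p := (center G).index) rfl
  have : IsMulCommutative G := isMulCommutative_of_isCyclic_quotient_center_self G
  rw [center_eq_top, index_top] at hprime
  exact Nat.not_prime_one hprime

section MinPrime

variable {G : Type*} [Group G] [Finite G] {p : ℕ}
  (hmin : ∀ q : ℕ, q.Prime → q ∣ Nat.card G → p ≤ q)
include hmin

theorem Subgroup.mul_card_le_card_of_lt {H K : Subgroup G} (hHK : H < K) :
    p * Nat.card H ≤ Nat.card K := by
  obtain ⟨m, hm⟩ := card_dvd_of_le hHK.le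
  have hm1 : m ≠ 1 := by
    rintro rfl
    exact hHK.ne (eq_of_le_of_card_ge hHK.le (by rw [hm, mul_one]))
  have hm0 : m ≠ 0 := by
    rintro rfl
    exact Nat.card_pos.ne' (hm.trans (mul_zero _))
  have hmG : m ∣ Nat.card G := (Dvd.intro_left _ hm.symm).trans K.card_subgroup_dvd_card
  calc p * Nat.card H ≤ m * Nat.card H :=
        Nat.mul_le_mul_right _
          ((Nat.le_minFac_of_forall_prime_dvd_le hmin hmG hm1).trans (Nat.minFac_le (by omega)))
    _ = Nat.card K := by rw [hm, mul_comm]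

theorem Subgroup.mul_card_center_le_card_centralizer {g : G} (hg : g ∉ center G) :
    p * Nat.card (center G) ≤ Nat.card (centralizer {g}) :=
  mul_card_le_card_of_lt hmin <| (center_le_centralizer _).lt_of_not_ge fun h ↦
    hg (h (mem_centralizer_singleton_iff.mpr rfl))

theorem Subgroup.mul_card_center_lt_card (hG : center G ≠ ⊤) :
    p * Nat.card (center G) < Nat.card G := by
  have hm1 : (center G).index ≠ 1 := fun h ↦ hG (index_eq_one.mp h)
  have hm2 : 2 ≤ (center G).index := by
    have := (center G).index_ne_zero_of_finite
    omega
  have hpm : p < (center G).index :=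
    (Nat.le_minFac_of_forall_prime_dvd_le hmin (center G).index_dvd_card hm1).trans_lt
      ((Nat.not_prime_iff_minFac_lt hm2).mp (not_prime_index_center G))
  calc p * Nat.card (center G) < (center G).index * Nat.card (center G) :=
        Nat.mul_lt_mul_of_pos_right hpm Nat.card_pos
    _ = Nat.card G := by rw [mul_comm, card_mul_index]

end MinPrime

theorem Subgroup.sum_card_centralizer_eq_card_conjClasses_mul_card (G : Type*) [Group G]
    [Fintype G] :
    ∑ g : G, Nat.card (centralizer {g}) = Nat.card (ConjClasses G) * Nat.card G := by
  rw [← card_comm_eq_card_conjClasses_mul_card,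
    Nat.card_congr (Equiv.subtypeProdEquivSigmaSubtype Commute), Nat.card_sigma]
  exact Finset.sum_congr rfl fun g _ ↦ Nat.card_congr <|
    Equiv.subtypeEquivRight fun _ ↦ mem_centralizer_singleton_iff.trans eq_comm

theorem Subgroup.le_card_conjClasses_mul_card_of_le_card_centralizer {G : Type*} [Group G]
    [Finite G] {c : ℕ}
    (hc : ∀ g ∉ center G, c ≤ Nat.card (centralizer {g})) :
    Nat.card (center G) * Nat.card G + (Nat.card G - Nat.card (center G)) * c ≤
      Nat.card (ConjClasses G) * Nat.card G := by
  classical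
  cases nonempty_fintype G
  have hZ : Nat.card (center G) = (Finset.univ.filter (· ∈ center G)).card := by
    rw [Nat.card_eq_fintype_card, Fintype.card_subtype]
  have hG : Nat.card G = (Finset.univ.filter (· ∈ center G)).card +
      (Finset.univ.filter (· ∉ center G)).card := by
    rw [Finset.card_filter_add_card_filter_not, Finset.card_univ, Nat.card_eq_fintype_card]
  have hcentral : ∑ g ∈ Finset.univ with g ∈ center G, Nat.card (centralizer {g}) =
      Nat.card (center G) * Nat.card G := by
    rw [hZ, ← smul_eq_mul, ← Finset.sum_const]
    refine Finset.sum_congr rfl fun g hg ↦ ?_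
    have hg : {g} ⊆ (center G : Set G) := Set.singleton_subset_iff.mpr (Finset.mem_filter.mp hg).2
    rw [centralizer_eq_top_iff_subset.mpr hg, card_top]
  have hnoncentral : (Nat.card G - Nat.card (center G)) * c ≤
      ∑ g ∈ Finset.univ with g ∉ center G, Nat.card (centralizer {g}) := by
    rw [hG, hZ, Nat.add_sub_cancel_left, ← smul_eq_mul, ← Finset.sum_const]
    exact Finset.sum_le_sum fun g hg ↦ hc g (Finset.mem_filter.mp hg).2
  rw [← sum_card_centralizer_eq_card_conjClasses_mul_card,
    ← Finset.sum_filter_add_sum_filter_not Finset.univ (· ∈ center G), hcentral]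
  exact Nat.add_le_add_left hnoncentral _

theorem card_conjClasses_ge_general (G : Type*) [Group G] [Finite G]
    (h : ¬ ∀ a b : G, a * b = b * a)
    (p : ℕ)
    (hmin : ∀ q : ℕ, q.Prime → q ∣ Nat.card G → p ≤ q) :
    p * Nat.card (Subgroup.center G) + 1 ≤ Nat.card (ConjClasses G) := by
  have hG : center G ≠ ⊤ := fun hG ↦ h fun a b ↦ (mem_center_iff.mp (hG ▸ mem_top a) b).symm
  have hlt := mul_card_center_lt_card hmin hG
  have hclass := le_card_conjClasses_mul_card_of_le_card_centralizer fun _ hg ↦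
    mul_card_center_le_card_centralizer hmin hg
  have hpos : 0 < Nat.card (center G) := Nat.card_pos
  obtain ⟨r, hr⟩ := Nat.exists_eq_add_of_le (card_le_card_group (center G))
  rw [hr] at hlt
  rw [hr, Nat.add_sub_cancel_left] at hclass
  by_contra! hk
  nlinarith [Nat.mul_le_mul_right (Nat.card (center G) + r) (Nat.le_of_lt_succ hk),
    Nat.mul_lt_mul_of_pos_left hlt hpos]

theorem card_conjClasses_ge (G : Type*) [Group G] [Finite G]
    (h : ¬ ∀ a b : G, a * b = b * a)
    (p : ℕ) (hp : p.Prime) (hpd : p ∣ Nat.card G)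
    (hmin : ∀ q : ℕ, q.Prime → q ∣ Nat.card G → p ≤ q) :
    p * Nat.card (Subgroup.center G) + 1 ≤ Nat.card (ConjClasses G) :=
  card_conjClasses_ge_general G h p hmin
end
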